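/- Let n, k, ℓ, τ be integers with n > k ≥ 10, 1 ≤ ℓ ≤ n/2, and τ ≥ 1, let ℓ* := ⌈(n−k)/20⌉, and let α ≥ 1 be a real number. Define f(m, j, t) := α^{j(m−j)} · 2^{j(m−j)·m²/2^{t/2}}. Then f(n−ℓ*, ℓ, τ) · f(n, ℓ*, τ−1)^{ℓ/(n−ℓ*)} ≤ f(n, ℓ, τ). -/
import Mathlib


noncomputable section

/-- `f(m, j, t) = α^(j(m-j)) * 2^(j(m-j)·m²/2^(t/2))`. -/
def f (α : ℝ) (m j t : ℤ) : ℝ :=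
  α ^ ((j : ℝ) * ((m : ℝ) - (j : ℝ))) *
    2 ^ ((j : ℝ) * ((m : ℝ) - (j : ℝ)) * (m : ℝ) ^ 2 / 2 ^ ((t : ℝ) / 2))

lemma combine_rpow (α : ℝ) (hα : 1 ≤ α) (A B C D e A' B' : ℝ)
    (hA : A + C * e = A') (hB : B + D * e ≤ B') :
    (α ^ A * (2:ℝ) ^ B) * (α ^ C * (2:ℝ) ^ D) ^ e ≤ α ^ A' * (2:ℝ) ^ B' := by
  have hα0 : (0:ℝ) < α := lt_of_lt_of_le one_pos hα
  have h2 : (0:ℝ) < 2 := by norm_num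
  rw [Real.mul_rpow (Real.rpow_nonneg hα0.le _) (Real.rpow_nonneg h2.le _),
    ← Real.rpow_mul hα0.le, ← Real.rpow_mul h2.le]
  have : α ^ A * 2 ^ B * (α ^ (C * e) * 2 ^ (D * e))
      = α ^ (A + C * e) * (2:ℝ) ^ (B + D * e) := by
    rw [Real.rpow_add hα0, Real.rpow_add h2]; ring
  rw [this, hA]
  exact mul_le_mul_of_nonneg_left
    (Real.rpow_le_rpow_of_exponent_le one_le_two hB) (Real.rpow_nonneg hα0.le _)

theorem stmt9 (n k ℓ τ : ℤ) (hnk : k < n) (hk : 10 ≤ k)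
    (hℓ1 : 1 ≤ ℓ) (hℓ2 : (ℓ : ℝ) ≤ (n : ℝ) / 2) (hτ : 1 ≤ τ)
    (lstar : ℤ) (hlstar : lstar = ⌈((n : ℝ) - (k : ℝ)) / 20⌉)
    (α : ℝ) (hα : 1 ≤ α) :
    f α (n - lstar) ℓ τ * f α n lstar (τ - 1) ^ ((ℓ : ℝ) / ((n : ℝ) - (lstar : ℝ))) ≤
      f α n ℓ τ := by
  have hk' : (10:ℝ) ≤ (k:ℝ) := by exact_mod_cast hk
  have hn11 : (11:ℝ) ≤ (n:ℝ) := by exact_mod_cast (by omega : (11:ℤ) ≤ n)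
  have hL1 : (1:ℝ) ≤ (ℓ:ℝ) := by exact_mod_cast hℓ1
  have hs1 : (1:ℝ) ≤ (lstar:ℝ) := by
    have hpos : (0:ℝ) < ((n:ℝ) - (k:ℝ)) / 20 := by
      have : (k:ℝ) < (n:ℝ) := by exact_mod_cast hnk
      linarith
    have : 0 < lstar := by rw [hlstar]; exact Int.ceil_pos.mpr hpos
    exact_mod_cast this
  have hs2 : (lstar:ℝ) < ((n:ℝ) - (k:ℝ)) / 20 + 1 := by
    rw [hlstar]; exact Int.ceil_lt_add_one _
  set N : ℝ := (n:ℝ) with hN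
  set L : ℝ := (ℓ:ℝ) with hLdef
  set s : ℝ := (lstar:ℝ) with hsdef
  have hs10 : 10 * s ≤ N := by linarith
  have hNs : (0:ℝ) < N - s := by linarith
  -- the square root of 2 as a rpow
  set r : ℝ := (2:ℝ) ^ ((1:ℝ)/2) with hrdef
  have hr0 : (0:ℝ) < r := Real.rpow_pos_of_pos (by norm_num) _
  have hr2 : r * r = 2 := by
    rw [hrdef, ← Real.rpow_add (by norm_num)]; norm_num
  have hr32 : r ≤ 3/2 := by nlinarith
  have hE0 : (0:ℝ) < (2:ℝ) ^ ((τ:ℝ)/2) := Real.rpow_pos_of_pos (by norm_num) _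
  have hsplit : (2:ℝ) ^ (((τ:ℝ) - 1)/2) = (2:ℝ) ^ ((τ:ℝ)/2) / r := by
    rw [hrdef, ← Real.rpow_sub (by norm_num)]
    ring_nf
  -- reduce to the exponent inequality
  unfold f
  push_cast
  rw [hsplit]
  apply combine_rpow α hα
  · field_simp
    ring
  · -- exponent inequality for the base-2 part
    have key : L * (N - s - L) * (N - s) ^ 2 + r * s * L * N ^ 2
        ≤ L * (N - L) * N ^ 2 := by
      have haux : r * N ^ 2 ≤ (N - L) * (2 * N - s) + (N - s) ^ 2 := by
        nlinarith [mul_nonneg (by linarith : (0:ℝ) ≤ N - L - N/2) (by linarith : (0:ℝ) ≤ 2*N - s),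
          mul_nonneg (by linarith : (0:ℝ) ≤ N/2) (by linarith : (0:ℝ) ≤ N/10 - s),
          mul_nonneg (by linarith : (0:ℝ) ≤ N/10 - s) (by linarith : (0:ℝ) ≤ 19*N/10 - s),
          mul_nonneg (by linarith : (0:ℝ) ≤ 3/2 - r) (sq_nonneg N)]
      nlinarith [mul_nonneg (mul_nonneg (by linarith : (0:ℝ) ≤ L) (by linarith : (0:ℝ) ≤ s))
        (by linarith : (0:ℝ) ≤ (N - L) * (2 * N - s) + (N - s) ^ 2 - r * N ^ 2)]
    have hEq : L * (N - s - L) * (N - s) ^ 2 / (2:ℝ) ^ ((τ:ℝ)/2)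
        + s * (N - s) * N ^ 2 / ((2:ℝ) ^ ((τ:ℝ)/2) / r) * (L / (N - s))
        = (L * (N - s - L) * (N - s) ^ 2 + r * s * L * N ^ 2) / (2:ℝ) ^ ((τ:ℝ)/2) := by
      field_simp
    rw [hEq]
    exact div_le_div_of_nonneg_right key hE0.le |>.trans_eq rfl
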